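/- Let X be a geodesic δ-hyperbolic space, [x,y] a geodesic segment from x to y, and γ a rectifiable path from x to y with length(γ) ≤ |xy| + ℓ. Then every point z of γ satisfies d(z,[x,y]) ≤ ℓ/2 + 8δ. -/

import Mathlib

open Metric Set

/-- Four-point condition for δ-hyperbolicity. -/
def FourPointHyp (X : Type*) [MetricSpace X] (δ : ℝ) : Prop :=
  ∀ x y z w : X,
    dist x y + dist z w ≤ max (dist x z + dist y w) (dist y z + dist x w) + 2 * δ

/-- `s` is a geodesic segment from `a` to `b`. -/
def IsGeodSegment {X : Type*} [MetricSpace X] (a b : X) (s : Set X) : Prop :=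
  ∃ f : ℝ → X, f 0 = a ∧ f (dist a b) = b ∧
    (∀ u ∈ Icc (0:ℝ) (dist a b), ∀ v ∈ Icc (0:ℝ) (dist a b),
      dist (f u) (f v) = |u - v|) ∧
    s = f '' Icc (0:ℝ) (dist a b)

/-- `X` is a geodesic space. -/
def IsGeodesicSpace (X : Type*) [MetricSpace X] : Prop :=
  ∀ a b : X, ∃ s : Set X, IsGeodSegment a b s

theorem edist_add_edist_le_eVariationOn {α E : Type*} [LinearOrder α] [PseudoEMetricSpace E]
    (f : α → E) {a b c : α} (hab : a ≤ b) (hbc : b ≤ c) :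
    edist (f a) (f b) + edist (f b) (f c) ≤ eVariationOn f (Icc a c) := by
  have hsplit := eVariationOn.Icc_add_Icc f (s := univ) hab hbc (mem_univ b)
  simp only [univ_inter] at hsplit
  rw [← hsplit]
  exact add_le_add (eVariationOn.edist_le f (left_mem_Icc.2 hab) (right_mem_Icc.2 hab))
    (eVariationOn.edist_le f (left_mem_Icc.2 hbc) (right_mem_Icc.2 hbc))

theorem IsGeodSegment.exists_dist_eq {X : Type*} [MetricSpace X] {a b : X} {s : Set X}
    (hs : IsGeodSegment a b s) {u : ℝ} (hu₀ : 0 ≤ u) (hu : u ≤ dist a b) :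
    ∃ p ∈ s, dist a p = u ∧ dist b p = dist a b - u := by
  obtain ⟨f, hfa, hfb, hiso, rfl⟩ := hs
  have hu_mem : u ∈ Icc 0 (dist a b) := ⟨hu₀, hu⟩
  refine ⟨f u, mem_image_of_mem f hu_mem, ?_, ?_⟩
  · rw [← hfa, hiso 0 (left_mem_Icc.2 dist_nonneg) u hu_mem, zero_sub, abs_neg,
      abs_of_nonneg hu₀]
  · have hbu := hiso _ (right_mem_Icc.2 dist_nonneg) u hu_mem
    rwa [hfb, abs_of_nonneg (by linarith)] at hbu

/- Apply the four-point condition to `x, y, z` and the point `p ∈ [x, y]` with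
`|xp| - |yp| = |xz| - |yz|`, which makes the two terms of the maximum equal. -/
theorem FourPointHyp.infDist_le_of_isGeodSegment {X : Type*} [MetricSpace X] {δ : ℝ}
    (hyp : FourPointHyp X δ) {x y : X} {s : Set X} (hs : IsGeodSegment x y s) (z : X) :
    infDist z s ≤ (dist x z + dist y z - dist x y) / 2 + 2 * δ := by
  have hyz := dist_triangle y x z
  have hxz := dist_triangle x y z
  rw [dist_comm y x] at hyz
  obtain ⟨p, hps, hdist_xp, hdist_yp⟩ := hs.exists_dist_eq (u := (dist x z - dist y z + dist x y) / 2)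
    (by linarith) (by linarith)
  have h4 := hyp x y z p
  rw [hdist_xp, hdist_yp, max_eq_left (by linarith)] at h4
  calc infDist z s ≤ dist z p := infDist_le_dist_of_mem hps
    _ ≤ _ := by linarith

theorem stmt2_general {X : Type*} [MetricSpace X] (δ ℓ : ℝ) (hδ : 0 ≤ δ) (hℓ : 0 ≤ ℓ)
    (hyp : FourPointHyp X δ)
    (x y : X) (s : Set X) (hs : IsGeodSegment x y s)
    (γ : ℝ → X)
    (h0 : γ 0 = x) (h1 : γ 1 = y)
    (hlen : eVariationOn γ (Icc (0:ℝ) 1) ≤ ENNReal.ofReal (dist x y + ℓ)) :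
    ∀ t ∈ Icc (0:ℝ) 1, infDist (γ t) s ≤ ℓ / 2 + 8 * δ := by
  rintro t ⟨ht₀, ht₁⟩
  have hvar := (edist_add_edist_le_eVariationOn γ ht₀ ht₁).trans hlen
  rw [h0, h1, edist_dist, edist_dist, ← ENNReal.ofReal_add dist_nonneg dist_nonneg,
    ENNReal.ofReal_le_ofReal_iff (by positivity), dist_comm (γ t) y] at hvar
  have hgromov := hyp.infDist_le_of_isGeodSegment hs (γ t)
  linarith

/-- In a geodesic δ-hyperbolic space, a path `γ` from `x` to `y` of length at most
`|xy| + ℓ` stays in the `(ℓ/2 + 8δ)`-neighborhood of a geodesic segment `[x,y]`. -/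
theorem stmt2 {X : Type*} [MetricSpace X] (δ ℓ : ℝ) (hδ : 0 ≤ δ) (hℓ : 0 ≤ ℓ)
    (hyp : FourPointHyp X δ) (hgeo : IsGeodesicSpace X)
    (x y : X) (s : Set X) (hs : IsGeodSegment x y s)
    (γ : ℝ → X) (hcont : ContinuousOn γ (Icc (0:ℝ) 1))
    (h0 : γ 0 = x) (h1 : γ 1 = y)
    (hlen : eVariationOn γ (Icc (0:ℝ) 1) ≤ ENNReal.ofReal (dist x y + ℓ)) :
    ∀ t ∈ Icc (0:ℝ) 1, infDist (γ t) s ≤ ℓ / 2 + 8 * δ :=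
  stmt2_general δ ℓ hδ hℓ hyp x y s hs γ h0 h1 hlen
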